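/- arXiv:1707.02836 — 3 statements merged into one kernel-verified Lean document; each statement's English description precedes it below -/
import Mathlib

section
/- For coprime integers 0 < a < r with Hirzebruch-Jung continued fraction expansions r/a = [α₁,...,αₙ] and r/(r−a) = [β₁,...,β_l], the sums satisfy Σᵢ(αᵢ−1) = Σⱼ(βⱼ−1). -/
/-- Hirzebruch-Jung continued fraction: `hjCont [a1,...,an] = (p, q)` means
`[a1,...,an] = p/q` with `p, q` the standard (coprime) continuants. -/
def hjCont : List ℤ → ℤ × ℤ
  | [] => (1, 0)
  | a :: l => (a * (hjCont l).1 - (hjCont l).2, (hjCont l).1)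

lemma hj_bounds (l : List ℤ) (h : ∀ x ∈ l, 2 ≤ x) :
    0 ≤ (hjCont l).2 ∧ (hjCont l).2 < (hjCont l).1 ∧ (l ≠ [] → 1 ≤ (hjCont l).2) := by
  induction l with
  | nil => simp [hjCont]
  | cons c t ih =>
    have hc : 2 ≤ c := h c (by simp)
    obtain ⟨h0, h1, _⟩ := ih (fun x hx => h x (by simp [hx]))
    refine ⟨?_, ?_, ?_⟩
    · simp [hjCont]; linarith
    · simp [hjCont]; nlinarith
    · intro _; simp [hjCont]; linarith

lemma key (n : ℕ) : ∀ (r a : ℤ), r.toNat ≤ n → IsCoprime r a → 0 < a → a < r →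
    ∀ αs βs : List ℤ, (∀ x ∈ αs, 2 ≤ x) → (∀ x ∈ βs, 2 ≤ x) →
    hjCont αs = (r, a) → hjCont βs = (r, r - a) →
    (αs.map (· - 1)).sum = (αs.length : ℤ) + βs.length - 1 := by
  induction n using Nat.strong_induction_on with
  | _ n IH =>
  intro r a hn hcop h1 h2 αs βs hα hβ hαs hβs
  obtain ⟨u, v, huv⟩ := hcop
  match αs with
  | [] => simp [hjCont, Prod.ext_iff] at hαs; omega
  | c :: l =>
  match βs with
  | [] => simp [hjCont, Prod.ext_iff] at hβs; omega
  | b :: m =>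
  have hc : 2 ≤ c := hα c (by simp)
  have hb : 2 ≤ b := hβ b (by simp)
  have hl : ∀ x ∈ l, 2 ≤ x := fun x hx => hα x (by simp [hx])
  have hm : ∀ x ∈ m, 2 ≤ x := fun x hx => hβ x (by simp [hx])
  obtain ⟨hq0, hqp, hqne⟩ := hj_bounds l hl
  obtain ⟨ht0, hts, htne⟩ := hj_bounds m hm
  rcases hE : hjCont l with ⟨p, q⟩
  rcases hF : hjCont m with ⟨s, t⟩
  rw [hE] at hq0 hqp hqne
  rw [hF] at ht0 hts htne
  simp only at hq0 hqp hqne ht0 hts htne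
  simp only [hjCont, hE, hF, Prod.mk.injEq] at hαs hβs
  obtain ⟨hr1, ha1⟩ := hαs
  obtain ⟨hr2, ha2⟩ := hβs
  by_cases hc2 : c = 2
  · subst hc2
    by_cases hq1 : q = 0
    · -- base case: l = [], r = 2, a = 1
      have hl0 : l = [] := by by_contra hne; have := hqne hne; omega
      subst hl0
      simp [hjCont, Prod.ext_iff] at hE
      have hm0 : m = [] := by by_contra hne; have := htne hne; omega
      subst hm0
      simp
    · -- q ≥ 1 : recurse on (a, q) with βs' = (b-1) :: m
      have hq1' : 1 ≤ q := by omega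
      have hb3 : 3 ≤ b := by nlinarith
      have hγ : hjCont ((b - 1) :: m) = (a, a - q) := by
        simp only [hjCont, hF, Prod.mk.injEq]
        constructor <;> nlinarith
      have hcop' : IsCoprime a q := ⟨2 * u + v, -u, by linear_combination huv + u * hr1 - 2 * u * ha1⟩
      have hrec := IH a.toNat (by omega) a q (le_refl _) hcop' (by omega) (by omega)
        l ((b-1)::m) hl
        (by intro x hx; simp at hx; rcases hx with h | h; omega; exact hm x h)
        (by rw [hE, Prod.mk.injEq]; omega) hγ
      simp only [List.map_cons, List.sum_cons, List.length_cons] at *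
      push_cast at hrec ⊢
      linarith
  · -- c ≥ 3 : recurse on (r - a, a) with αs' = (c-1) :: l, βs' = m
    have hc3 : 3 ≤ c := by omega
    have hp1 : 1 ≤ p := by omega
    have hra : 2 * a < r := by nlinarith
    have hb2 : b = 2 := by nlinarith
    have hαs' : hjCont ((c - 1) :: l) = (r - a, a) := by
      simp only [hjCont, hE, Prod.mk.injEq]
      constructor <;> nlinarith
    rw [hb2] at hr2
    have hm' : hjCont m = (r - a, (r - a) - a) := by
      rw [hF, Prod.mk.injEq]; omega
    have hcop' : IsCoprime (r - a) a := ⟨u, u + v, by linear_combination huv⟩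
    have hrec := IH (r - a).toNat (by omega) (r - a) a (le_refl _) hcop' h1 (by omega)
      ((c-1)::l) m
      (by intro x hx; simp at hx; rcases hx with h | h; omega; exact hl x h) hm hαs' hm'
    simp only [List.map_cons, List.sum_cons, List.length_cons] at *
    push_cast at hrec ⊢
    linarith

theorem stmt0 (r a : ℤ) (hcop : IsCoprime r a) (h1 : 0 < a) (h2 : a < r)
    (αs βs : List ℤ) (hα : ∀ x ∈ αs, 2 ≤ x) (hβ : ∀ x ∈ βs, 2 ≤ x)
    (hαs : hjCont αs = (r, a)) (hβs : hjCont βs = (r, r - a)) :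
    (αs.map (· - 1)).sum = (βs.map (· - 1)).sum := by
  obtain ⟨u, v, huv⟩ := hcop
  have hcop1 : IsCoprime r a := ⟨u, v, huv⟩
  have hcop' : IsCoprime r (r - a) := ⟨u + v, -v, by linear_combination huv⟩
  have e1 := key r.toNat r a le_rfl hcop1 h1 h2 αs βs hα hβ hαs hβs
  have e2 := key r.toNat r (r - a) le_rfl hcop' (by omega) (by omega) βs αs hβ hα hβs
    (by rw [hαs, Prod.mk.injEq]; omega)
  linarith
end

section
/- If coprime 0 < a < r satisfy r/a = [α₁,...,αₙ] and r/(r−a) = [β₁,...,β_l] (Hirzebruch-Jung expansions), then the fraction with expansion [α₁,...,αₙ,α] (for any integer α ≥ 2) has dual expansion [β₁,...,β_{l-1},β_l+1,2,...,2] with α−2 twos appended at the end. -/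
def hjStep (x : ℤ) : Module.End ℤ (ℤ × ℤ) :=
  (x • LinearMap.fst ℤ ℤ ℤ - LinearMap.snd ℤ ℤ ℤ).prod (LinearMap.fst ℤ ℤ ℤ)

def hjAct (L : List ℤ) : Module.End ℤ (ℤ × ℤ) := (L.map hjStep).prod

def hjDual : Module.End ℤ (ℤ × ℤ) :=
  (LinearMap.fst ℤ ℤ ℤ).prod (LinearMap.fst ℤ ℤ ℤ - LinearMap.snd ℤ ℤ ℤ)

def hjCone : Set (ℤ × ℤ) := {v | 0 < v.1 ∧ v.2 ≤ v.1}

@[simp]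
lemma hjStep_apply (x : ℤ) (v : ℤ × ℤ) : hjStep x v = (x * v.1 - v.2, v.1) := by
  simp [hjStep]

@[simp]
lemma hjDual_apply (v : ℤ × ℤ) : hjDual v = (v.1, v.1 - v.2) := rfl

lemma hjAct_cons (x : ℤ) (L : List ℤ) (v : ℤ × ℤ) :
    hjAct (x :: L) v = hjStep x (hjAct L v) := by
  simp [hjAct, Module.End.mul_apply]

lemma hjCont_append (L L' : List ℤ) : hjCont (L ++ L') = hjAct L (hjCont L') := by
  induction L with
  | nil => simp [hjAct]
  | cons x L ih => rw [List.cons_append, hjAct_cons, ← ih]; simp [hjCont]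

lemma hjCont_eq_hjAct (L : List ℤ) : hjCont L = hjAct L (1, 0) := by
  simpa [hjCont] using hjCont_append L []

lemma hjCont_append_singleton (L : List ℤ) (x : ℤ) :
    hjCont (L ++ [x]) = hjAct L (x, 1) := by
  simp [hjCont_append, hjCont]

lemma hjCont_replicate_two (k : ℕ) :
    hjCont (List.replicate k 2) = ((k : ℤ) + 1, (k : ℤ)) := by
  induction k with
  | zero => rfl
  | succ k ih => rw [List.replicate_succ, hjCont, ih]; push_cast; ring_nf

lemma hjAct_det (L : List ℤ) (v w : ℤ × ℤ) :
    (hjAct L v).1 * (hjAct L w).2 - (hjAct L v).2 * (hjAct L w).1 = v.1 * w.2 - v.2 * w.1 := by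
  induction L with
  | nil => simp [hjAct]
  | cons x L ih => simp only [hjAct_cons, hjStep_apply]; linear_combination ih

lemma mapsTo_hjStep_hjCone {x : ℤ} (hx : 2 ≤ x) : Set.MapsTo (hjStep x) hjCone hjCone := by
  rintro ⟨p, q⟩ ⟨hp, hq⟩
  simp only [hjCone, Set.mem_ofPred_eq, hjStep_apply] at *
  constructor <;> nlinarith

lemma mapsTo_hjAct_hjCone {L : List ℤ} (hL : ∀ x ∈ L, 2 ≤ x) :
    Set.MapsTo (hjAct L) hjCone hjCone := by
  induction L with
  | nil => intro v hv; simpa [hjAct] using hv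
  | cons x L ih =>
    simp only [List.mem_cons, forall_eq_or_imp] at hL
    intro v hv
    rw [hjAct_cons]
    exact mapsTo_hjStep_hjCone hL.1 (ih hL.2 hv)

lemma hjCont_fst_pos {L : List ℤ} (hL : ∀ x ∈ L, 2 ≤ x) : 0 < (hjCont L).1 := by
  rw [hjCont_eq_hjAct]
  exact (mapsTo_hjAct_hjCone hL (by simp [hjCone] : ((1 : ℤ), (0 : ℤ)) ∈ hjCone)).1

lemma hjCont_fst_lt_append_singleton {L : List ℤ} {y : ℤ} (hL : ∀ x ∈ L, 2 ≤ x)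
    (hy : 2 ≤ y) : (hjCont L).1 < (hjCont (L ++ [y])).1 := by
  have hcone : (y - 1, (1 : ℤ)) ∈ hjCone := ⟨by linarith, by linarith⟩
  have hsplit : (y, (1 : ℤ)) = (y - 1, 1) + (1, 0) := by ext <;> simp
  have := (mapsTo_hjAct_hjCone hL hcone).1
  rw [hjCont_append_singleton, hjCont_eq_hjAct, hsplit, map_add, Prod.fst_add]
  linarith

lemma hjCont_append_singleton_det (L : List ℤ) (y : ℤ) :
    (hjCont (L ++ [y])).2 * (hjCont L).1 - (hjCont (L ++ [y])).1 * (hjCont L).2 = 1 := by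
  rw [hjCont_append_singleton, hjCont_eq_hjAct]
  linear_combination -hjAct_det L (y, 1) (1, 0)

lemma hjCont_append_pair (L : List ℤ) (y x : ℤ) :
    hjCont (L ++ [y, x]) = x • hjCont (L ++ [y]) - hjCont L := by
  have : hjCont [y, x] = x • (y, 1) - (1, 0) := by
    simp only [hjCont, Prod.smul_mk, smul_eq_mul, Prod.mk_sub_mk, Prod.mk.injEq, and_true]
    ring
  rw [hjCont_append, this, map_sub, map_smul, ← hjCont_append_singleton, ← hjCont_eq_hjAct]

lemma hjCont_append_succ_replicate_two (L : List ℤ) (z : ℤ) (k : ℕ) :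
    hjCont (L ++ (z + 1) :: List.replicate k 2) =
      ((k : ℤ) + 1) • hjCont (L ++ [z]) + hjCont L := by
  have : hjCont ((z + 1) :: List.replicate k 2) = ((k : ℤ) + 1) • (z, 1) + (1, 0) := by
    simp only [hjCont, hjCont_replicate_two, Prod.smul_mk, smul_eq_mul, Prod.mk_add_mk,
      Prod.mk.injEq]
    constructor <;> ring
  rw [hjCont_append, this, map_add, map_smul, ← hjCont_append_singleton, ← hjCont_eq_hjAct]

lemma hjCont_of_hjCont_append_eq_hjDual {A B : List ℤ} {y z : ℤ}
    (hA : ∀ x ∈ A ++ [y], 2 ≤ x) (hB : ∀ x ∈ B ++ [z], 2 ≤ x)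
    (hdual : hjCont (B ++ [z]) = hjDual (hjCont (A ++ [y]))) :
    hjCont B = hjDual (hjCont (A ++ [y]) - hjCont A) := by
  simp only [List.mem_append, List.mem_singleton] at hA hB
  have hA₀ : ∀ x ∈ A, 2 ≤ x := fun x hx => hA x (.inl hx)
  have hB₀ : ∀ x ∈ B, 2 ≤ x := fun x hx => hB x (.inl hx)
  have hlt_A := hjCont_fst_lt_append_singleton hA₀ (hA y (.inr rfl))
  have hlt_B := hjCont_fst_lt_append_singleton hB₀ (hB z (.inr rfl))
  have hpos_A := hjCont_fst_pos hA₀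
  have hpos_B := hjCont_fst_pos hB₀
  have hdet_A := hjCont_append_singleton_det A y
  have hdet_B := hjCont_append_singleton_det B z
  rw [hdual] at hlt_B hdet_B
  generalize hjCont (A ++ [y]) = v at *
  generalize hjCont A = v' at *
  generalize hjCont B = w at *
  obtain ⟨r, a⟩ := v
  obtain ⟨r', a'⟩ := v'
  obtain ⟨b, c⟩ := w
  simp only [hjDual_apply, Prod.mk_sub_mk, Prod.mk.injEq] at *
  have hdvd : r ∣ (r - r') - b := ⟨b * (r - a - r' + a') - (r - r') * c, by
    linear_combination b * hdet_A - (r - r') * hdet_B⟩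
  have hb : b = r - r' := by
    have := Int.eq_zero_of_abs_lt_dvd hdvd (abs_lt.mpr ⟨by linarith, by linarith⟩)
    linarith
  subst hb
  refine ⟨rfl, mul_left_cancel₀ (ne_of_gt (hpos_B.trans hlt_B)) ?_⟩
  linear_combination hdet_A - hdet_B

theorem stmt2_general (r a : ℤ) (h1 : 0 < a)
    (αs βs' : List ℤ) (βl α : ℤ)
    (hα : ∀ x ∈ αs, 2 ≤ x) (hβ : ∀ x ∈ βs' ++ [βl], 2 ≤ x) (hαα : 2 ≤ α)
    (hαs : hjCont αs = (r, a)) (hβs : hjCont (βs' ++ [βl]) = (r, r - a)) :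
    hjCont ((βs' ++ [βl + 1]) ++ List.replicate (α - 2).toNat 2) =
      ((hjCont (αs ++ [α])).1, (hjCont (αs ++ [α])).1 - (hjCont (αs ++ [α])).2) := by
  obtain rfl | ⟨A, y, rfl⟩ := List.eq_nil_or_concat' αs
  · simp only [hjCont, Prod.mk.injEq] at hαs
    omega
  have hdual : hjCont (βs' ++ [βl]) = hjDual (hjCont (A ++ [y])) := by rw [hβs, hαs]; rfl
  have hprev := hjCont_of_hjCont_append_eq_hjDual hα hβ hdual
  have hk : ((α - 2).toNat : ℤ) + 1 = α - 1 := by omega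
  change _ = hjDual _
  rw [List.append_assoc, List.singleton_append, hjCont_append_succ_replicate_two, hk, hdual,
    hprev, List.append_assoc, List.singleton_append, hjCont_append_pair]
  simp only [map_sub, map_smul]
  module

theorem stmt2 (r a : ℤ) (hcop : IsCoprime r a) (h1 : 0 < a) (h2 : a < r)
    (αs βs' : List ℤ) (βl α : ℤ)
    (hα : ∀ x ∈ αs, 2 ≤ x) (hβ : ∀ x ∈ βs' ++ [βl], 2 ≤ x) (hαα : 2 ≤ α)
    (hαs : hjCont αs = (r, a)) (hβs : hjCont (βs' ++ [βl]) = (r, r - a)) :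
    hjCont ((βs' ++ [βl + 1]) ++ List.replicate (α - 2).toNat 2) =
      ((hjCont (αs ++ [α])).1, (hjCont (αs ++ [α])).1 - (hjCont (αs ++ [α])).2) :=
  stmt2_general r a h1 αs βs' βl α hα hβ hαα hαs hβs
end

section
/- Every finite-dimensional local associative unital ℂ-algebra of dimension at most 3 is isomorphic to one of: ℂ[x]/(xⁱ) for 1 ≤ i ≤ 3, or ℂ[x,y]/(x,y)². -/
/-!
The nonunits of a finite-dimensional local algebra `A` over an algebraically closed field `K`
form a subspace `𝔪` with `A = K ⊕ 𝔪`, and a nonunit `x` has spectrum `{0}`, so its minimal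
polynomial is `X ^ d`. With `n = dim A`, if some nonunit has `x ^ (n - 1) ≠ 0` then `d = n`, the
powers `1, x, …, x ^ (n - 1)` form a basis and `A ≅ K[X]/(X ^ n)`. Otherwise `n = 3` and every
element of `𝔪` squares to zero. Since `x² = y² = 0` and `xy ≠ 0` would make `1, x, y, xy`
linearly independent, `𝔪² = 0`; then `A` is commutative and a basis `x, y` of `𝔪` gives
`A ≅ K[x, y]/(x, y)²`.
-/

open Polynomial Module

section Field

variable {K A B : Type*} [Field K] [Ring A] [Algebra K A] [Ring B] [Algebra K B]

theorem AlgHom.nonempty_algEquiv_of_surjective [FiniteDimensional K B] (f : B →ₐ[K] A)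
    (hf : Function.Surjective f) (h : finrank K B ≤ finrank K A) : Nonempty (A ≃ₐ[K] B) := by
  have : FiniteDimensional K A := Module.Finite.of_surjective f.toLinearMap hf
  have hrank : finrank K B = finrank K A :=
    h.antisymm (LinearMap.finrank_range_le f.toLinearMap |>.trans_eq' <| by
      rw [LinearMap.range_eq_top.mpr hf, finrank_top])
  exact ⟨(AlgEquiv.ofBijective f ⟨(LinearMap.injective_iff_surjective_of_finrank_eq_finrank
    (f := f.toLinearMap) hrank).mpr hf, hf⟩).symm⟩

theorem nonempty_algEquiv_quotient_minpoly [FiniteDimensional K A] (x : A)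
    (h : finrank K A ≤ (minpoly K x).natDegree) :
    Nonempty (A ≃ₐ[K] K[X] ⧸ Ideal.span {minpoly K x}) := by
  have hd : (minpoly K x).natDegree = finrank K A := (minpoly.natDegree_le x).antisymm h
  let pb := AdjoinRoot.powerBasis (minpoly.ne_zero (IsIntegral.of_finite K x))
  have : FiniteDimensional K (K[X] ⧸ Ideal.span {minpoly K x}) := pb.finite
  let Φ : K[X] ⧸ Ideal.span {minpoly K x} →ₐ[K] A :=
    Ideal.Quotient.liftₐ _ (aeval x) fun p hp => by
      obtain ⟨q, rfl⟩ := Ideal.mem_span_singleton'.mp hp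
      rw [map_mul, minpoly.aeval, mul_zero]
  have hsurj : Function.Surjective Φ := by
    rw [← AlgHom.coe_toLinearMap, ← LinearMap.range_eq_top, eq_top_iff,
      ← (linearIndependent_pow x).span_eq_top_of_card_eq_finrank' (by simp [hd]),
      Submodule.span_le]
    rintro _ ⟨i, rfl⟩
    exact ⟨Ideal.Quotient.mkₐ K _ (X ^ (i : ℕ)), by
      rw [AlgHom.toLinearMap_apply, ← AlgHom.comp_apply, Ideal.Quotient.liftₐ_comp]
      simp⟩
  have hQ : finrank K (K[X] ⧸ Ideal.span {minpoly K x}) = (minpoly K x).natDegree := pb.finrank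
  exact Φ.nonempty_algEquiv_of_surjective hsurj (by rw [hQ, hd])

/- Multiplying a relation by `x` on the left and/or by `y` on the right isolates one
coefficient at a time as a multiple of `x * y`. -/
theorem linearIndependent_one_of_mul_self_eq_zero_of_mul_ne_zero {x y : A} (hx : x * x = 0)
    (hy : y * y = 0) (hxy : x * y ≠ 0) : LinearIndependent K ![1, x, y, x * y] := by
  have hxxy : x * x * y = 0 := by rw [hx, zero_mul]
  have hxyy : x * y * y = 0 := by rw [mul_assoc, hy, mul_zero]
  rw [Fintype.linearIndependent_iff]
  intro g hg
  simp only [Fin.sum_univ_four, Matrix.cons_val] at hg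
  have h0 : g 0 • (x * y) = 0 := by
    simpa [mul_add, add_mul, mul_smul_comm, smul_mul_assoc, ← mul_assoc, hxxy, hxyy] using
      congrArg (x * · * y) hg
  have hg0 : g 0 = 0 := (smul_eq_zero.mp h0).resolve_right hxy
  have h2 : g 2 • (x * y) = 0 := by
    simpa [hg0, mul_add, mul_smul_comm, ← mul_assoc, hx] using congrArg (x * ·) hg
  have hg2 : g 2 = 0 := (smul_eq_zero.mp h2).resolve_right hxy
  have h1 : g 1 • (x * y) = 0 := by
    simpa [hg0, add_mul, smul_mul_assoc, hy, hxyy] using congrArg (· * y) hg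
  have hg1 : g 1 = 0 := (smul_eq_zero.mp h1).resolve_right hxy
  have hg3 : g 3 = 0 := by
    simpa [hg0, hg1, hg2, hxy] using hg
  intro i
  fin_cases i <;> assumption

theorem mul_eq_zero_of_mul_self_eq_zero [FiniteDimensional K A] (hA : finrank K A ≤ 3) {x y : A}
    (hx : x * x = 0) (hy : y * y = 0) : x * y = 0 := by
  by_contra hxy
  have := (linearIndependent_one_of_mul_self_eq_zero_of_mul_ne_zero (K := K) hx hy
    hxy).fintype_card_le_finrank
  simp only [Fintype.card_fin] at this
  omega

end Field

theorem Algebra.adjoin_le_span_insert_one {R B : Type*} [CommSemiring R] [Semiring B] [Algebra R B]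
    {s : Set B} (hs : ∀ a ∈ s, ∀ b ∈ s, a * b = 0) :
    Subalgebra.toSubmodule (Algebra.adjoin R s) ≤ Submodule.span R (insert 1 s) := by
  let V := Submodule.span R (insert 1 s)
  have hmul : ∀ a b, a ∈ V → b ∈ V → a * b ∈ V := by
    intro a b ha hb
    have hab := Submodule.mul_mem_mul ha hb
    rw [Submodule.span_mul_span] at hab
    refine Submodule.span_le.mpr ?_ hab
    rintro _ ⟨a, ha, b, hb, rfl⟩
    rcases ha with rfl | ha
    · simpa using Submodule.subset_span hb
    rcases hb with rfl | hb
    · simpa using Submodule.subset_span (Set.mem_insert_of_mem 1 ha)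
    · simp [hs a ha b hb]
  exact Algebra.adjoin_le (S := V.toSubalgebra (Submodule.subset_span (Set.mem_insert 1 s)) hmul)
    fun a ha => Submodule.subset_span (Set.mem_insert_of_mem 1 ha)

theorem MvPolynomial.span_insert_one_range_mk_X_eq_top {σ R : Type*} [CommRing R]
    {I : Ideal (MvPolynomial σ R)} (hI : ∀ i j, X i * X j ∈ I) :
    Submodule.span R (insert 1 (Set.range fun i => Ideal.Quotient.mkₐ R I (X i))) = ⊤ := by
  refine eq_top_iff.mpr (le_trans ?_ (Algebra.adjoin_le_span_insert_one ?_))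
  · rw [Set.range_comp' (g := Ideal.Quotient.mkₐ R I), Algebra.adjoin_image, adjoin_range_X,
      Algebra.map_top, (AlgHom.range_eq_top _).mpr (Ideal.Quotient.mkₐ_surjective R I),
      Algebra.top_toSubmodule]
  · rintro _ ⟨i, rfl⟩ _ ⟨j, rfl⟩
    rw [← map_mul, Ideal.Quotient.mkₐ_eq_mk, Ideal.Quotient.eq_zero_iff_mem]
    exact hI i j

namespace MvPolynomial

theorem X_mul_X_mem_span_X_sq {K : Type*} [CommRing K] (i j : Fin 2) :
    X i * X j ∈ (Ideal.span {X 0, X 1} : Ideal (MvPolynomial (Fin 2) K)) ^ 2 := by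
  rw [pow_two]
  exact Ideal.mul_mem_mul (Ideal.subset_span (by fin_cases i <;> simp))
    (Ideal.subset_span (by fin_cases j <;> simp))

theorem exists_surjective_quotient_span_X_sq {K A : Type*} [CommRing K] [CommRing A]
    [Algebra K A] (v : Fin 2 → A) (hv : ∀ i j, v i * v j = 0)
    (hspan : Submodule.span K (insert 1 (Set.range v)) = ⊤) :
    ∃ Φ : MvPolynomial (Fin 2) K ⧸ (Ideal.span {X 0, X 1} : Ideal (MvPolynomial (Fin 2) K)) ^ 2
      →ₐ[K] A, Function.Surjective Φ := by
  have hker :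
      (Ideal.span {X 0, X 1} : Ideal (MvPolynomial (Fin 2) K)) ^ 2 ≤ RingHom.ker (aeval v) := by
    rw [pow_two, Ideal.span_mul_span', Ideal.span_le]
    rintro _ ⟨p, hp, q, hq, rfl⟩
    rcases hp with rfl | rfl <;> rcases hq with rfl | rfl <;> simp [hv]
  refine ⟨Ideal.Quotient.liftₐ _ (aeval v) fun p hp => RingHom.mem_ker.mp (hker hp), ?_⟩
  rw [← AlgHom.coe_toLinearMap, ← LinearMap.range_eq_top, eq_top_iff, ← hspan,
    Submodule.span_le]
  rintro _ (rfl | ⟨i, rfl⟩)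
  · exact ⟨1, by rw [AlgHom.toLinearMap_apply, map_one]⟩
  · exact ⟨Ideal.Quotient.mkₐ K _ (X i), by
      rw [AlgHom.toLinearMap_apply, ← AlgHom.comp_apply, Ideal.Quotient.liftₐ_comp, aeval_X]⟩

variable {σ K : Type*} [Fintype σ] [Field K] {I : Ideal (MvPolynomial σ K)}

theorem finiteDimensional_quotient_of_mul_X_mem (hI : ∀ i j, X i * X j ∈ I) :
    FiniteDimensional K (MvPolynomial σ K ⧸ I) :=
  Module.finite_def.mpr <| span_insert_one_range_mk_X_eq_top hI ▸
    Submodule.fg_span ((Set.finite_range _).insert 1)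

theorem finrank_quotient_le_of_mul_X_mem (hI : ∀ i j, X i * X j ∈ I) :
    finrank K (MvPolynomial σ K ⧸ I) ≤ Fintype.card σ + 1 := by
  classical
  let s : Finset (MvPolynomial σ K ⧸ I) :=
    insert 1 (Finset.univ.image fun i => Ideal.Quotient.mkₐ K I (X i))
  have hs : Submodule.span K (s : Set (MvPolynomial σ K ⧸ I)) = ⊤ := by
    simpa [s] using span_insert_one_range_mk_X_eq_top hI
  have h1 : finrank K (Submodule.span K (s : Set (MvPolynomial σ K ⧸ I))) ≤ s.card :=
    finrank_span_finset_le_card s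
  rw [hs, finrank_top] at h1
  calc finrank K (MvPolynomial σ K ⧸ I) ≤ s.card := h1
    _ ≤ Fintype.card σ + 1 := (Finset.card_insert_le _ _).trans
      (Nat.add_le_add_right (Finset.card_image_le.trans_eq Finset.card_univ) 1)

end MvPolynomial

section IsLocalRing

variable {K A : Type*} [Field K] [Ring A] [Algebra K A] [IsLocalRing A]

theorem isUnit_sub_algebraMap {x : A} (hx : ¬IsUnit x) {c : K} (hc : c ≠ 0) :
    IsUnit (x - algebraMap K A c) := by
  have hc' : IsUnit (x + (algebraMap K A c - x)) := by
    rw [add_sub_cancel]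
    exact (isUnit_iff_ne_zero.mpr hc).map _
  simpa using ((IsLocalRing.isUnit_or_isUnit_of_isUnit_add hc').resolve_left hx).neg

variable (K A) in
def nonunitsSubmodule : Submodule K A where
  carrier := nonunits A
  add_mem' := IsLocalRing.nonunits_add
  zero_mem' := zero_mem_nonunits.mpr zero_ne_one
  smul_mem' c a ha := by
    rcases eq_or_ne c 0 with rfl | hc
    · rw [zero_smul]; exact zero_mem_nonunits.mpr zero_ne_one
    · exact fun h => ha ((isUnit_smul_iff (Units.mk0 c hc) a).mp h)

variable [IsAlgClosed K] [FiniteDimensional K A]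

theorem exists_sub_algebraMap_mem_nonunitsSubmodule (a : A) :
    ∃ c : K, a - algebraMap K A c ∈ nonunitsSubmodule K A := by
  obtain ⟨c, hc⟩ := spectrum.nonempty_of_isAlgClosed_of_finiteDimensional K a
  exact ⟨c, fun h => spectrum.mem_iff.mp hc (by simpa using h.neg)⟩

theorem isCompl_span_one_nonunitsSubmodule :
    IsCompl (K ∙ (1 : A)) (nonunitsSubmodule K A) := by
  refine ⟨Submodule.disjoint_def.mpr fun a ha hna => ?_,
    Submodule.codisjoint_iff_exists_add_eq.mpr fun a => ?_⟩
  · obtain ⟨c, rfl⟩ := Submodule.mem_span_singleton.mp ha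
    rcases eq_or_ne c 0 with rfl | hc
    · exact zero_smul _ _
    · exact absurd ((isUnit_smul_iff (Units.mk0 c hc) (1 : A)).mpr isUnit_one) hna
  · obtain ⟨c, hc⟩ := exists_sub_algebraMap_mem_nonunitsSubmodule (K := K) a
    exact ⟨algebraMap K A c, a - algebraMap K A c, Submodule.mem_span_singleton.mpr
      ⟨c, (Algebra.algebraMap_eq_smul_one c).symm⟩, hc, add_sub_cancel _ _⟩

theorem finrank_nonunitsSubmodule_add_one :
    finrank K (nonunitsSubmodule K A) + 1 = finrank K A := by
  rw [← Submodule.finrank_add_eq_of_isCompl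
    (isCompl_span_one_nonunitsSubmodule (K := K) (A := A)), finrank_span_singleton one_ne_zero,
    add_comm]

theorem minpoly_eq_X_pow {x : A} (hx : ¬IsUnit x) :
    minpoly K x = X ^ (minpoly K x).natDegree := by
  have hint := IsIntegral.of_finite K x
  -- a nonzero root `r` splits off the unit factor `x - r`, leaving a smaller annihilator of `x`
  have hroots : ∀ r ∈ (minpoly K x).roots, r = 0 := by
    intro r hr
    by_contra hr0
    set q := minpoly K x /ₘ (X - C r)
    have hfac : (X - C r) * q = minpoly K x :=
      mul_divByMonic_eq_iff_isRoot.mpr (isRoot_of_mem_roots hr)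
    have hq : q.Monic := (monic_X_sub_C r).of_mul_monic_left (hfac ▸ minpoly.monic hint)
    refine minpoly.aeval_ne_zero_of_dvdNotUnit_minpoly hint hq
      ⟨hq.ne_zero, X - C r, not_isUnit_X_sub_C r, by rw [mul_comm, hfac]⟩ ?_
    have h0 := congrArg (aeval x) hfac
    rw [map_mul, minpoly.aeval, map_sub, aeval_X, aeval_C] at h0
    exact (isUnit_sub_algebraMap hx hr0).mul_right_eq_zero.mp h0
  have hX : minpoly K x = X ^ (minpoly K x).roots.card := by
    conv_lhs => rw [(IsAlgClosed.splits _).eq_prod_roots_of_monic (minpoly.monic hint),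
      Multiset.eq_replicate_of_mem hroots]
    simp
  rw [hX, natDegree_X_pow]

theorem nonempty_algEquiv_quotient_X_pow_finrank {x : A} (hx : ¬IsUnit x)
    (hx' : x ^ (finrank K A - 1) ≠ 0) :
    Nonempty (A ≃ₐ[K] K[X] ⧸ Ideal.span {(X : K[X]) ^ finrank K A}) := by
  have hmin := minpoly_eq_X_pow (K := K) hx
  have hdeg : finrank K A ≤ (minpoly K x).natDegree := by
    by_contra! hlt
    have h0 := minpoly.aeval K x
    rw [hmin, map_pow, aeval_X] at h0
    exact hx' (pow_eq_zero_of_le (by omega) h0)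
  rw [(minpoly.natDegree_le x).antisymm hdeg] at hmin
  have h := nonempty_algEquiv_quotient_minpoly x hdeg
  rwa [hmin] at h

theorem exists_ne_zero_not_isUnit (h : 1 < finrank K A) : ∃ x : A, x ≠ 0 ∧ ¬IsUnit x := by
  have hN := finrank_nonunitsSubmodule_add_one (K := K) (A := A)
  obtain ⟨x, hx, hx0⟩ := Submodule.exists_mem_ne_zero_of_ne_bot (p := nonunitsSubmodule K A)
    fun hbot => by rw [hbot, finrank_bot] at hN; omega
  exact ⟨x, hx0, hx⟩

theorem commute_of_mul_eq_zero_of_mem_nonunitsSubmodule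
    (h : ∀ x ∈ nonunitsSubmodule K A, ∀ y ∈ nonunitsSubmodule K A, x * y = 0) (a b : A) :
    Commute a b := by
  obtain ⟨c, hc⟩ := exists_sub_algebraMap_mem_nonunitsSubmodule (K := K) a
  obtain ⟨d, hd⟩ := exists_sub_algebraMap_mem_nonunitsSubmodule (K := K) b
  have hcomm : Commute (a - algebraMap K A c) (b - algebraMap K A d) := by
    rw [Commute, SemiconjBy, h _ hc _ hd, h _ hd _ hc]
  have := (Algebra.commute_algebraMap_left c _).add_left
    ((Algebra.commute_algebraMap_right d _).add_right hcomm)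
  rwa [add_sub_cancel, add_sub_cancel] at this

theorem nonempty_algEquiv_quotient_sq (h3 : finrank K A = 3)
    (hsq : ∀ x ∈ nonunitsSubmodule K A, x * x = 0) :
    Nonempty (A ≃ₐ[K] MvPolynomial (Fin 2) K ⧸
      (Ideal.span {MvPolynomial.X 0, MvPolynomial.X 1} : Ideal (MvPolynomial (Fin 2) K)) ^ 2) := by
  have hmul : ∀ x ∈ nonunitsSubmodule K A, ∀ y ∈ nonunitsSubmodule K A, x * y = 0 :=
    fun x hx y hy => mul_eq_zero_of_mul_self_eq_zero (K := K) h3.le (hsq x hx) (hsq y hy)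
  let : CommRing A :=
    { ‹Ring A› with
      mul_comm a b := (commute_of_mul_eq_zero_of_mem_nonunitsSubmodule hmul a b).eq }
  have hN : finrank K (nonunitsSubmodule K A) = 2 := by
    have := finrank_nonunitsSubmodule_add_one (K := K) (A := A)
    omega
  let b := Module.finBasisOfFinrankEq K (nonunitsSubmodule K A) hN
  have hspan : Submodule.span K (insert 1 (Set.range fun i => (b i : A))) = ⊤ := by
    rw [Submodule.span_insert, Set.range_comp' (g := Subtype.val), ← Submodule.coe_subtype,
      Submodule.span_image, b.span_eq, Submodule.map_subtype_top,
      isCompl_span_one_nonunitsSubmodule.sup_eq_top]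
  obtain ⟨Φ, hΦ⟩ := MvPolynomial.exists_surjective_quotient_span_X_sq _
    (fun i j => hmul _ (b i).2 _ (b j).2) hspan
  have hXX := MvPolynomial.X_mul_X_mem_span_X_sq (K := K)
  have := MvPolynomial.finiteDimensional_quotient_of_mul_X_mem hXX
  exact Φ.nonempty_algEquiv_of_surjective hΦ
    (h3 ▸ MvPolynomial.finrank_quotient_le_of_mul_X_mem hXX)

end IsLocalRing

theorem stmt11 (S : Type) [Ring S] [Algebra ℂ S] [FiniteDimensional ℂ S]
    [IsLocalRing S] (hdim : Module.finrank ℂ S ≤ 3) :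
    (∃ i : ℕ, 1 ≤ i ∧ i ≤ 3 ∧
      Nonempty (S ≃ₐ[ℂ] (Polynomial ℂ ⧸ Ideal.span {(Polynomial.X : Polynomial ℂ) ^ i}))) ∨
    Nonempty (S ≃ₐ[ℂ]
      (MvPolynomial (Fin 2) ℂ ⧸
        (Ideal.span {MvPolynomial.X 0, MvPolynomial.X 1} : Ideal (MvPolynomial (Fin 2) ℂ)) ^ 2)) := by
  have hpos : 0 < finrank ℂ S := finrank_pos
  by_cases h : ∃ x : S, ¬IsUnit x ∧ x ^ (finrank ℂ S - 1) ≠ 0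
  · obtain ⟨x, hx, hx'⟩ := h
    exact Or.inl ⟨_, hpos, hdim, nonempty_algEquiv_quotient_X_pow_finrank hx hx'⟩
  push Not at h
  have h1 : finrank ℂ S ≠ 1 := fun h1 => by simpa [h1] using h 0 not_isUnit_zero
  have h2 : finrank ℂ S ≠ 2 := fun h2 => by
    obtain ⟨x, hx0, hx⟩ := exists_ne_zero_not_isUnit (K := ℂ) (A := S) (by omega)
    exact hx0 (by simpa [h2] using h x hx)
  exact Or.inr <| nonempty_algEquiv_quotient_sq (by omega) fun x hx => by
    simpa [pow_two, show finrank ℂ S - 1 = 2 by omega] using h x hx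
end
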